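/- Let S be a numerical semigroup of genus g with weight W ≤ 2g − 1. Then for every n ≥ 3, ∑_{i=1}^n (m_i − i) − 1 ≥ (n − 2)g, where m_i is the i-th smallest positive element of S. -/

import Mathlib

/-!
`Nat.nth` indexes the positive elements of `S` from zero, so `m_{k+1}` is its `k`-th value. Then
`m_{k+1} - (k+1)` is the number of gaps below `m_{k+1}`; summing over `k < n` and swapping the
order of summation counts, for each gap `ℓ`, the indices `k < n` with `ℓ < m_{k+1}`. Exactly
`ℓ - r(ℓ)` positive elements are at most `ℓ`, where `r(ℓ)` is the rank of `ℓ` among the gaps, so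
each gap contributes at least `n - ℓ + r(ℓ)`. As the ranks sum to `g(g+1)/2`, this gives
`n g - W ≤ ∑ (m_i - i)`, and `W ≤ 2g - 1` finishes.
-/

open Finset

theorem Finset.two_mul_sum_card_filter_le {α : Type*} [LinearOrder α] (s : Finset α) :
    2 * ∑ x ∈ s, #{y ∈ s | y ≤ x} = #s * (#s + 1) := by
  induction s using Finset.induction_on_max with
  | empty => simp
  | insert a s hlt ih =>
    have ha : a ∉ s := fun h => (hlt a h).false
    have hfilt : ∀ x ∈ s, #{y ∈ insert a s | y ≤ x} = #{y ∈ s | y ≤ x} := fun x hx => by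
      rw [filter_insert, if_neg (hlt x hx).not_ge]
    rw [sum_insert ha, sum_congr rfl hfilt, filter_true_of_mem (fun y hy => ?_),
      card_insert_of_notMem ha]
    · linarith
    · rcases mem_insert.1 hy with rfl | hy
      exacts [le_rfl, (hlt y hy).le]

theorem Nat.card_filter_range_lt_nth {p : ℕ → Prop} [DecidablePred p]
    (hp : (Set.ofPred p).Infinite) (n a : ℕ) :
    #{k ∈ range n | a < nth p k} = n - count p (a + 1) := by
  have : {k ∈ range n | a < nth p k} = Ico (count p (a + 1)) n := by
    ext k
    simp [count_le_iff_le_nth hp, and_comm]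
  rw [this, Nat.card_Ico]

section CofiniteSet

open Nat

variable {S : Set ℕ}

noncomputable def weight (hfin : Sᶜ.Finite) : ℤ :=
  ∑ ℓ ∈ hfin.toFinset, (ℓ : ℤ) - #hfin.toFinset * (#hfin.toFinset + 1) / 2

theorem infinite_setOf_mem_and_pos (hfin : Sᶜ.Finite) : {m | m ∈ S ∧ 0 < m}.Infinite := by
  refine Set.infinite_of_finite_compl ((hfin.union (Set.finite_singleton 0)).subset fun x hx => ?_)
  simp only [Set.mem_compl_iff, Set.mem_ofPred_eq, not_and, not_lt, Nat.le_zero] at hx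
  by_cases hx' : x ∈ S
  · exact Or.inr (hx hx')
  · exact Or.inl hx'

theorem count_add_card_filter_lt_add_one [DecidablePred (· ∈ S)] (h0 : 0 ∈ S)
    (hfin : Sᶜ.Finite) {m : ℕ} (hm : 0 < m) :
    count (fun m => m ∈ S ∧ 0 < m) m + #{x ∈ hfin.toFinset | x < m} + 1 = m := by
  have hmem : #{x ∈ range m | x ∈ S} = count (fun m => m ∈ S ∧ 0 < m) m + 1 := by
    rw [count_eq_card_filter_range, ← card_insert_of_notMem (s := {x ∈ range m | _}) (a := 0)
      (by simp)]
    congr 1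
    ext x
    simp only [mem_filter, mem_range, mem_insert]
    constructor
    · rintro ⟨hxm, hxS⟩
      rcases x.eq_zero_or_pos with rfl | hx
      exacts [Or.inl rfl, Or.inr ⟨hxm, hxS, hx⟩]
    · rintro (rfl | ⟨hxm, hxS, -⟩)
      exacts [⟨hm, h0⟩, ⟨hxm, hxS⟩]
  have hgap : {x ∈ range m | x ∉ S} = {x ∈ hfin.toFinset | x < m} := by
    ext x
    simp [and_comm]
  have := card_filter_add_card_filter_not (s := range m) (· ∈ S)
  rw [hmem, hgap, card_range] at this
  omega

theorem nth_eq_add_card_filter_lt (h0 : 0 ∈ S) (hfin : Sᶜ.Finite) (k : ℕ) :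
    nth (fun m => m ∈ S ∧ 0 < m) k =
      k + 1 + #{x ∈ hfin.toFinset | x < nth (fun m => m ∈ S ∧ 0 < m) k} := by
  classical
  have hP := infinite_setOf_mem_and_pos hfin
  have := count_add_card_filter_lt_add_one h0 hfin (nth_mem_of_infinite hP k).2
  rw [count_nth_of_infinite hP] at this
  omega

theorem sub_add_card_filter_le_le_card_filter_lt_nth (h0 : 0 ∈ S) (hfin : Sᶜ.Finite)
    (n ℓ : ℕ) :
    (n : ℤ) - ℓ + #{x ∈ hfin.toFinset | x ≤ ℓ} ≤
      #{k ∈ range n | ℓ < nth (fun m => m ∈ S ∧ 0 < m) k} := by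
  classical
  have := count_add_card_filter_lt_add_one h0 hfin ℓ.add_one_pos
  simp only [Nat.lt_add_one_iff] at this
  rw [Nat.card_filter_range_lt_nth (infinite_setOf_mem_and_pos hfin)]
  omega

theorem mul_card_sub_weight_le_sum_nth_sub (h0 : 0 ∈ S) (hfin : Sᶜ.Finite) (n : ℕ) :
    n * #hfin.toFinset - weight hfin ≤
      ∑ i ∈ Icc 1 n, ((nth (fun m => m ∈ S ∧ 0 < m) (i - 1) : ℤ) - i) := by
  set G := hfin.toFinset
  set m := nth (fun m => m ∈ S ∧ 0 < m)
  have hm : ∀ k, m k = k + 1 + #{x ∈ G | x < m k} := nth_eq_add_card_filter_lt h0 hfin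
  have hrank : ∑ ℓ ∈ G, (#{x ∈ G | x ≤ ℓ} : ℤ) = #G * (#G + 1) / 2 := by
    have : 2 * ∑ ℓ ∈ G, (#{x ∈ G | x ≤ ℓ} : ℤ) = #G * (#G + 1) := by
      exact_mod_cast G.two_mul_sum_card_filter_le
    omega
  calc n * #G - weight hfin = ∑ ℓ ∈ G, ((n : ℤ) - ℓ + #{x ∈ G | x ≤ ℓ}) := by
        rw [weight, ← hrank, sum_add_distrib, sum_sub_distrib, sum_const, nsmul_eq_mul]
        ring
    _ ≤ ∑ ℓ ∈ G, (#{k ∈ range n | ℓ < m k} : ℤ) :=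
        sum_le_sum fun ℓ _ => sub_add_card_filter_le_le_card_filter_lt_nth h0 hfin n ℓ
    _ = ∑ k ∈ range n, (#{x ∈ G | x < m k} : ℤ) := by
        exact_mod_cast (sum_card_bipartiteAbove_eq_sum_card_bipartiteBelow
          (s := range n) (t := G) (fun k x => x < m k)).symm
    _ = ∑ i ∈ Icc 1 n, ((m (i - 1) : ℤ) - i) := by
        rw [← Ico_add_one_right_eq_Icc, sum_Ico_eq_sum_range, add_tsub_cancel_right]
        refine sum_congr rfl fun k _ => ?_
        rw [add_tsub_cancel_left]
        have := hm k
        push_cast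
        omega

end CofiniteSet

theorem stmt_4_general (S : Set ℕ) (h0 : (0 : ℕ) ∈ S)
    (hfin : Sᶜ.Finite) (g : ℕ) (hg : Sᶜ.ncard = g)
    (W : ℤ) (hW : W = (∑ ℓ ∈ hfin.toFinset, (ℓ : ℤ)) - g * (g + 1) / 2)
    (hWbound : W ≤ 2 * g - 1) :
    ∀ n : ℕ, 3 ≤ n →
      (n - 2 : ℤ) * g ≤
        (∑ i ∈ Finset.Icc 1 n,
          ((Nat.nth (fun m => m ∈ S ∧ 0 < m) (i - 1) : ℤ) - (i : ℤ))) - 1 := by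
  intro n _
  have hcard : #hfin.toFinset = g := by rw [← Set.ncard_eq_toFinset_card _ hfin, hg]
  have hweight : W = weight hfin := by rw [hW, weight, hcard]
  have := mul_card_sub_weight_le_sum_nth_sub h0 hfin n
  rw [hcard, ← hweight] at this
  linarith

/-- If a numerical semigroup `S` of genus `g` has weight
`W ≤ 2g - 1`, then for every `n ≥ 3`,
`∑_{i=1}^n (m_i - i) - 1 ≥ (n-2) g`. -/
theorem stmt_4 (S : Set ℕ) (h0 : (0 : ℕ) ∈ S)
    (hadd : ∀ a b : ℕ, a ∈ S → b ∈ S → a + b ∈ S)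
    (hfin : Sᶜ.Finite) (g : ℕ) (hg : Sᶜ.ncard = g)
    (W : ℤ) (hW : W = (∑ ℓ ∈ hfin.toFinset, (ℓ : ℤ)) - g * (g + 1) / 2)
    (hWbound : W ≤ 2 * g - 1) :
    ∀ n : ℕ, 3 ≤ n →
      (n - 2 : ℤ) * g ≤
        (∑ i ∈ Finset.Icc 1 n,
          ((Nat.nth (fun m => m ∈ S ∧ 0 < m) (i - 1) : ℤ) - (i : ℤ))) - 1 :=
  stmt_4_general S h0 hfin g hg W hW hWbound
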